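/- arXiv:1508.01806 — 2 statements merged into one kernel-verified Lean document; each statement's English description precedes it below -/
import Mathlib

section
/- If L₁ and L₂ are affine functions on ℝᵈ, S₁ and S₂ are subsets of ℝᵈ with L₁ ≤ L₂ on S₁ and L₂ ≤ L₁ on S₂, and the interiors in ℝᵈ of the convex hulls of S₁ and S₂ intersect, then L₁ = L₂ on the affine span of S₁ ∪ S₂. -/
theorem affine_eq_on_affineSpan_of_le_on_sets (d : ℕ)
    (L₁ L₂ : EuclideanSpace ℝ (Fin d) →ᵃ[ℝ] ℝ)
    (S₁ S₂ : Set (EuclideanSpace ℝ (Fin d)))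
    (h1 : ∀ x ∈ S₁, L₁ x ≤ L₂ x) (h2 : ∀ x ∈ S₂, L₂ x ≤ L₁ x)
    (hint : (interior (convexHull ℝ S₁) ∩ interior (convexHull ℝ S₂)).Nonempty) :
    ∀ x ∈ affineSpan ℝ (S₁ ∪ S₂), L₁ x = L₂ x := by
  obtain ⟨x₀, hx₁, hx₂⟩ := hint
  set f : EuclideanSpace ℝ (Fin d) →ᵃ[ℝ] ℝ := L₂ - L₁ with hfdef
  have hfval : ∀ x, f x = L₂ x - L₁ x := fun x => rfl
  have hf1 : ∀ x ∈ convexHull ℝ S₁, 0 ≤ f x := by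
    intro x hx
    have hconv : Convex ℝ (f ⁻¹' Set.Ici 0) := (convex_Ici (0:ℝ)).affine_preimage f
    have hsub : S₁ ⊆ f ⁻¹' Set.Ici 0 := fun y hy => by
      simp only [Set.mem_preimage, Set.mem_Ici, hfval, sub_nonneg]
      exact h1 y hy
    exact convexHull_min hsub hconv hx
  have hf2 : ∀ x ∈ convexHull ℝ S₂, f x ≤ 0 := by
    intro x hx
    have hconv : Convex ℝ (f ⁻¹' Set.Iic 0) := (convex_Iic (0:ℝ)).affine_preimage f
    have hsub : S₂ ⊆ f ⁻¹' Set.Iic 0 := fun y hy => by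
      simp only [Set.mem_preimage, Set.mem_Iic, hfval, sub_nonpos]
      exact h2 y hy
    exact convexHull_min hsub hconv hx
  have hx0 : f x₀ = 0 :=
    le_antisymm (hf2 _ (interior_subset hx₂)) (hf1 _ (interior_subset hx₁))
  have hlin : ∀ v : EuclideanSpace ℝ (Fin d), f.linear v = 0 := by
    intro v
    obtain ⟨ε, hε, hball⟩ := Metric.isOpen_iff.mp isOpen_interior x₀ hx₁
    set t : ℝ := ε / (2 * (‖v‖ + 1)) with ht
    have hvpos : (0:ℝ) < ‖v‖ + 1 := by positivity
    have htpos : 0 < t := by positivity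
    have hnorm : ‖t • v‖ < ε := by
      rw [norm_smul, Real.norm_eq_abs, abs_of_pos htpos, ht]
      rw [div_mul_eq_mul_div, div_lt_iff₀ (by positivity)]
      nlinarith [norm_nonneg v]
    have hmem : ∀ s : ℝ, |s| ≤ t → x₀ + s • v ∈ convexHull ℝ S₁ := by
      intro s hs
      apply interior_subset
      apply hball
      rw [Metric.mem_ball, dist_eq_norm]
      have : x₀ + s • v - x₀ = s • v := by abel
      rw [this, norm_smul, Real.norm_eq_abs]
      calc |s| * ‖v‖ ≤ t * ‖v‖ := by
            exact mul_le_mul_of_nonneg_right hs (norm_nonneg v)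
        _ ≤ ‖t • v‖ := by rw [norm_smul, Real.norm_eq_abs, abs_of_pos htpos]
        _ < ε := hnorm
    have key : ∀ s : ℝ, |s| ≤ t → 0 ≤ s * f.linear v := by
      intro s hs
      have := hf1 _ (hmem s hs)
      have heq : f (x₀ + s • v) = f.linear (s • v) + f x₀ := by
        have := f.map_vadd x₀ (s • v)
        simpa [vadd_eq_add, add_comm] using this
      rw [heq, hx0, add_zero, f.linear.map_smul] at this
      simpa using this
    have hpos := key t (by rw [abs_of_pos htpos])
    have hneg := key (-t) (by rw [abs_neg, abs_of_pos htpos])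
    nlinarith
  have hall : ∀ x, L₁ x = L₂ x := by
    intro x
    have heq : f x = f.linear (x - x₀) + f x₀ := by
      have := f.map_vadd x₀ (x - x₀)
      simpa [vadd_eq_add, sub_add_cancel, add_comm] using this
    have : f x = 0 := by rw [heq, hlin, hx0, add_zero]
    have := (hfval x) ▸ this
    linarith [this]
  intro x _
  exact hall x
end

section
/- Let φ : ℝᵈ → ℝ be convex, let p be a point on the sphere of radius r where φ attains its maximum M over the closed ball B_r, and let H be the hyperplane through p with normal p/‖p‖. Then φ(z) ≥ M for every z in the affine hyperplane p + H⊥-translate, i.e., for every z with ⟪z, p⟫ = ‖p‖² (z on the tangent hyperplane at p). -/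
/-! If `⟪y, p⟫ > ‖p‖²`, the line through `y` and `p` re-enters the ball of radius `‖p‖` beyond
`p`, so `p` lies strictly between `y` and a point `b` of that ball. Convexity and `φ b ≤ φ p` then
force `φ p ≤ φ y`. This covers the open half-space beyond the tangent hyperplane at `p`, and
continuity of convex functions in finite dimension extends it to the hyperplane itself. -/

open Set Filter Topology
open scoped RealInnerProductSpace

variable {E : Type*} [NormedAddCommGroup E] [InnerProductSpace ℝ E]

theorem exists_norm_eq_mem_openSegment_of_norm_sq_lt_inner {p y : E} (hy : ‖p‖ ^ 2 < ⟪y, p⟫) :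
    ∃ b : E, ‖b‖ = ‖p‖ ∧ p ∈ openSegment ℝ b y := by
  set c := ⟪y, p⟫ - ‖p‖ ^ 2
  have hc : 0 < c := sub_pos.2 hy
  have hpy : p - y ≠ 0 := by
    rintro h
    rw [sub_eq_zero.1 h, real_inner_self_eq_norm_sq] at hy
    exact lt_irrefl _ hy
  have hpy' : 0 < ‖p - y‖ ^ 2 := by positivity
  -- `b` is the second intersection point of the line through `y` and `p` with the sphere.
  set τ := 2 * c / ‖p - y‖ ^ 2
  have hτ : 0 < τ := by positivity
  refine ⟨p + τ • (p - y), ?_, 1 / (1 + τ), τ / (1 + τ), by positivity, by positivity,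
    by field_simp, ?_⟩
  · have hinner : ⟪p, p - y⟫ = -c := by
      rw [inner_sub_right, real_inner_self_eq_norm_sq, real_inner_comm]; ring
    have hsq : ‖p + τ • (p - y)‖ ^ 2 = ‖p‖ ^ 2 := by
      rw [norm_add_sq_real, inner_smul_right, norm_smul, Real.norm_of_nonneg hτ.le, hinner]
      have hτc : τ * ‖p - y‖ ^ 2 = 2 * c := div_mul_cancel₀ _ hpy'.ne'
      linear_combination τ * hτc
    exact (pow_left_inj₀ (norm_nonneg _) (norm_nonneg _) two_ne_zero).1 hsq
  · have hτ1 : 1 + τ ≠ 0 := by positivity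
    match_scalars <;> field_simp
    ring

variable {φ : E → ℝ} {p : E}

theorem ConvexOn.le_of_norm_sq_lt_inner (hφ : ConvexOn ℝ univ φ)
    (hmax : ∀ x ∈ Metric.closedBall 0 ‖p‖, φ x ≤ φ p) {y : E} (hy : ‖p‖ ^ 2 < ⟪y, p⟫) :
    φ p ≤ φ y := by
  obtain ⟨b, hb, hpb⟩ := exists_norm_eq_mem_openSegment_of_norm_sq_lt_inner hy
  exact hφ.le_right_of_left_le (mem_univ b) (mem_univ y) hpb
    (hmax b (by rw [mem_closedBall_zero_iff, hb]))

theorem ConvexOn.le_of_norm_sq_le_inner (hφ : ConvexOn ℝ univ φ) (hp : p ≠ 0)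
    (hmax : ∀ x ∈ Metric.closedBall 0 ‖p‖, φ x ≤ φ p) {z : E} (hz : ‖p‖ ^ 2 ≤ ⟪z, p⟫)
    (hcont : ContinuousAt φ z) : φ p ≤ φ z := by
  have hlim : Tendsto (fun t : ℝ => φ (z + t • p)) (𝓝[>] 0) (𝓝 (φ z)) := by
    refine hcont.tendsto.comp (tendsto_nhdsWithin_of_tendsto_nhds ?_)
    have hline : Continuous fun t : ℝ => z + t • p := by fun_prop
    simpa using hline.tendsto 0
  refine ge_of_tendsto hlim (eventually_nhdsWithin_of_forall fun t (ht : 0 < t) => ?_)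
  refine hφ.le_of_norm_sq_lt_inner hmax ?_
  rw [inner_add_left, real_inner_smul_left, real_inner_self_eq_norm_sq]
  linarith [mul_pos ht (pow_pos (norm_pos_iff.2 hp) 2)]

theorem convex_ge_max_on_tangent_hyperplane (d : ℕ)
    (φ : EuclideanSpace ℝ (Fin d) → ℝ) (r : ℝ) (p : EuclideanSpace ℝ (Fin d))
    (hconv : ConvexOn ℝ Set.univ φ) (hr : 0 < r) (hp : ‖p‖ = r)
    (hmax : ∀ x ∈ Metric.closedBall (0 : EuclideanSpace ℝ (Fin d)) r, φ x ≤ φ p) :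
    ∀ z : EuclideanSpace ℝ (Fin d), ⟪z, p⟫ = r ^ 2 → φ z ≥ φ p := by
  intro z hz
  subst hp
  exact hconv.le_of_norm_sq_le_inner (norm_pos_iff.1 hr) hmax hz.ge
    ((hconv.continuousOn isOpen_univ).continuousAt univ_mem)
end
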